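/- arXiv:1306.0945 — 3 statements merged into one kernel-verified Lean document; each statement's English description precedes it below -/
import Mathlib

section
/- The Choi map Φ is a positive linear map: for every positive semidefinite matrix X ∈ M₃(ℂ), the matrix Φ(X) is positive semidefinite. -/
open Matrix Complex ComplexOrder

/-- The Choi map on 3×3 complex matrices. -/
noncomputable def ChoiMap (X : Matrix (Fin 3) (Fin 3) ℂ) : Matrix (Fin 3) (Fin 3) ℂ :=
  !![X 0 0 + X 2 2, -X 0 1, -X 0 2;
     -X 1 0, X 1 1 + X 0 0, -X 1 2;
     -X 2 0, -X 2 1, X 2 2 + X 1 1]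

/-!
Every positive semidefinite matrix is a sum of rank-one matrices `v vᴴ` and `ChoiMap` is additive,
so it suffices to treat `X = v vᴴ`. Then `ChoiMap X = D - v vᴴ` with `D` diagonal,
`D i i = 2 |v i|² + |v (i - 1)|²` (indices mod 3), and positivity means
`|⟪x, v⟫|² ≤ ∑ i, D i i |x i|²`. By the triangle inequality this follows from the real inequality
`(∑ i, a i b i)² ≤ ∑ i, (2 a i² + a (i - 1)²) b i²` with `a = |v|`, `b = |x|`.
-/

theorem posSemidef_map_of_vecMulVec {n m 𝕜 R : Type*} [Finite n] [RCLike 𝕜]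
    [Ring R] [PartialOrder R] [StarRing R] [AddLeftMono R]
    (f : Matrix n n 𝕜 →+ Matrix m m R) (hf : ∀ v : n → 𝕜, (f (vecMulVec v (star v))).PosSemidef)
    {X : Matrix n n 𝕜} (hX : X.PosSemidef) : (f X).PosSemidef := by
  obtain ⟨k, v, rfl⟩ := posSemidef_iff_eq_sum_vecMulVec.mp hX
  rw [map_sum]
  exact posSemidef_sum _ fun i _ ↦ hf (v i)

theorem dotProduct_diagonal_sub_vecMulVec_mulVec {n : Type*} [Fintype n] [DecidableEq n]
    (d : n → ℝ) (v x : n → ℂ) :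
    star x ⬝ᵥ (diagonal (fun i ↦ (d i : ℂ)) - vecMulVec v (star v)) *ᵥ x =
      ((∑ i, d i * ‖x i‖ ^ 2 - ‖star x ⬝ᵥ v‖ ^ 2 : ℝ) : ℂ) := by
  rw [sub_mulVec, dotProduct_sub, vecMulVec_mulVec, op_smul_eq_smul, dotProduct_smul,
    smul_eq_mul, star_dotProduct v x, Complex.star_def, conj_mul']
  push_cast
  congr 1
  simp only [dotProduct, mulVec_diagonal, Pi.star_apply, RCLike.star_def]
  exact Finset.sum_congr rfl fun i _ ↦ by rw [mul_left_comm, conj_mul']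

theorem posSemidef_diagonal_sub_vecMulVec {n : Type*} [Fintype n] [DecidableEq n]
    (d : n → ℝ) (v : n → ℂ) (h : ∀ x : n → ℂ, ‖star x ⬝ᵥ v‖ ^ 2 ≤ ∑ i, d i * ‖x i‖ ^ 2) :
    (diagonal (fun i ↦ (d i : ℂ)) - vecMulVec v (star v)).PosSemidef := by
  refine .of_dotProduct_mulVec_nonneg ?_ fun x ↦ ?_
  · exact (isHermitian_diagonal_of_self_adjoint _ (by ext; simp)).sub
      (posSemidef_vecMulVec_self_star v).isHermitian
  · rw [dotProduct_diagonal_sub_vecMulVec_mulVec, zero_le_real, sub_nonneg]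
    exact h x

theorem sq_sum_mul_le_choi (a b : Fin 3 → ℝ) :
    (∑ i, a i * b i) ^ 2 ≤ ∑ i, (2 * a i ^ 2 + a (i - 1) ^ 2) * b i ^ 2 := by
  simp only [Fin.sum_univ_three, Fin.reduceSub]
  nlinarith [sq_nonneg (a 0 * b 0 - a 1 * b 1), sq_nonneg (a 1 * b 1 - a 2 * b 2),
    sq_nonneg (a 0 * b 0 - a 2 * b 2), sq_nonneg (a 0 * b 1 - a 1 * b 0),
    sq_nonneg (a 1 * b 2 - a 2 * b 1), sq_nonneg (a 2 * b 0 - a 0 * b 2)]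

theorem choiMap_add (A B : Matrix (Fin 3) (Fin 3) ℂ) :
    ChoiMap (A + B) = ChoiMap A + ChoiMap B := by
  ext i j
  fin_cases i <;> fin_cases j <;> simp [ChoiMap] <;> ring

theorem choiMap_vecMulVec (v : Fin 3 → ℂ) :
    ChoiMap (vecMulVec v (star v)) =
      diagonal (fun i ↦ ((2 * ‖v i‖ ^ 2 + ‖v (i - 1)‖ ^ 2 : ℝ) : ℂ)) - vecMulVec v (star v) := by
  ext i j
  -- without `zero_sub`, simp evaluates `(0 : Fin 3) - 1` to `2` instead of getting stuck at `-1`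
  fin_cases i <;> fin_cases j <;> simp [ChoiMap, vecMulVec_apply, mul_conj', -zero_sub] <;> ring

theorem posSemidef_choiMap_vecMulVec (v : Fin 3 → ℂ) :
    (ChoiMap (vecMulVec v (star v))).PosSemidef := by
  rw [choiMap_vecMulVec]
  refine posSemidef_diagonal_sub_vecMulVec _ v fun x ↦ ?_
  have triangle : ‖star x ⬝ᵥ v‖ ≤ ∑ i, ‖v i‖ * ‖x i‖ :=
    (norm_sum_le _ _).trans_eq (by simp [mul_comm])
  calc ‖star x ⬝ᵥ v‖ ^ 2 ≤ (∑ i, ‖v i‖ * ‖x i‖) ^ 2 := by gcongr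
    _ ≤ _ := sq_sum_mul_le_choi _ _

/-- The Choi map is a positive map: it sends positive semidefinite matrices to
positive semidefinite matrices. -/
theorem choiMap_positive (X : Matrix (Fin 3) (Fin 3) ℂ) (hX : X.PosSemidef) :
    (ChoiMap X).PosSemidef :=
  posSemidef_map_of_vecMulVec (AddMonoidHom.mk' ChoiMap choiMap_add)
    posSemidef_choiMap_vecMulVec hX
end

section
/- For all complex numbers x₁, x₂, x₃, the following inequality holds: |x₁|²|x₃|⁴ + |x₂|²|x₁|⁴ + |x₃|²|x₂|⁴ − |x₁|²|x₂|²|x₃|² − 2|x₁|²·Re(conj(x₂)²·x₃²) ≥ 0. (This quantity equals det(Ψ₃(xx*)) for x = (x₁,x₂,x₃)ᵗ, and the inequality follows from the arithmetic mean–geometric mean inequality.) -/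
/-!
With `a = ‖x₁‖²`, `b = ‖x₂‖²`, `c = ‖x₃‖²` we have `Re(conj(x₂)² x₃²) ≤ bc`, so the quantity is at
least `ac² + a²b + b²c − 3abc`. This is nonnegative by AM–GM, since the three terms
`ac², a²b, b²c` have product `(abc)³`.
-/

theorem Real.three_mul_le_add_add_of_mul_eq_pow_three {p q r m : ℝ} (hp : 0 ≤ p) (hq : 0 ≤ q)
    (hr : 0 ≤ r) (hm : 0 ≤ m) (h : p * q * r = m ^ 3) : 3 * m ≤ p + q + r := by
  have w : (0 : ℝ) ≤ ((3 : ℕ) : ℝ)⁻¹ := by positivity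
  have amgm := Real.geom_mean_le_arith_mean3_weighted w w w hp hq hr (by norm_num)
  rw [← Real.mul_rpow hp hq, ← Real.mul_rpow (mul_nonneg hp hq) hr, h,
    Real.pow_rpow_inv_natCast hm (by norm_num)] at amgm
  linarith

theorem Complex.re_conj_sq_mul_sq_le (z w : ℂ) :
    (starRingEnd ℂ z ^ 2 * w ^ 2).re ≤ ‖z‖ ^ 2 * ‖w‖ ^ 2 :=
  (re_le_norm _).trans_eq (by simp)

/-- The determinant inequality for Ψ₃: for all complex numbers x₁, x₂, x₃,
|x₁|²|x₃|⁴ + |x₂|²|x₁|⁴ + |x₃|²|x₂|⁴ − |x₁|²|x₂|²|x₃|² − 2|x₁|²·Re(conj(x₂)²x₃²) ≥ 0. -/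
theorem psi3_det_nonneg (x1 x2 x3 : ℂ) :
    0 ≤ ‖x1‖ ^ 2 * ‖x3‖ ^ 4
      + ‖x2‖ ^ 2 * ‖x1‖ ^ 4
      + ‖x3‖ ^ 2 * ‖x2‖ ^ 4
      - ‖x1‖ ^ 2 * ‖x2‖ ^ 2 * ‖x3‖ ^ 2
      - 2 * ‖x1‖ ^ 2 * ((starRingEnd ℂ x2) ^ 2 * x3 ^ 2).re := by
  have amgm : 3 * (‖x1‖ ^ 2 * ‖x2‖ ^ 2 * ‖x3‖ ^ 2) ≤
      ‖x1‖ ^ 2 * ‖x3‖ ^ 4 + ‖x2‖ ^ 2 * ‖x1‖ ^ 4 + ‖x3‖ ^ 2 * ‖x2‖ ^ 4 :=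
    Real.three_mul_le_add_add_of_mul_eq_pow_three (by positivity) (by positivity)
      (by positivity) (by positivity) (by ring)
  have hre := mul_le_mul_of_nonneg_left (Complex.re_conj_sq_mul_sq_le x2 x3) (sq_nonneg ‖x1‖)
  linear_combination amgm + 2 * hre
end

section
/- For real column vectors x = (x₁,x₂,x₃)ᵗ and y = (y₁,y₂,y₃)ᵗ in ℝ³, the real biquadratic form associated with the Choi map satisfies yᵗΦ(xxᵗ)y = (x₁²+x₃²)y₁² + (x₂²+x₁²)y₂² + (x₃²+x₂²)y₃² − 2(x₁x₂y₁y₂ + x₂x₃y₂y₃ + x₃x₁y₃y₁), and this quantity is nonnegative for all x, y ∈ ℝ³. -/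
open Matrix Complex ComplexOrder

/-!
The Choi form is positive semidefinite but not a sum of squares. Its product with `‖y‖²`,
however, is a sum of squares of cubic forms, which gives nonnegativity whenever `y ≠ 0`.
-/

def choiForm (x y : Fin 3 → ℝ) : ℝ :=
  (x 0 ^ 2 + x 2 ^ 2) * y 0 ^ 2 + (x 1 ^ 2 + x 0 ^ 2) * y 1 ^ 2
    + (x 2 ^ 2 + x 1 ^ 2) * y 2 ^ 2
    - 2 * (x 0 * x 1 * y 0 * y 1 + x 1 * x 2 * y 1 * y 2 + x 2 * x 0 * y 2 * y 0)

theorem dotProduct_choiMap_vecMulVec_mulVec (x y : Fin 3 → ℝ) :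
    (fun j => (y j : ℂ)) ⬝ᵥ
        (ChoiMap ((vecMulVec x x).map Complex.ofReal)).mulVec (fun j => (y j : ℂ)) =
      (choiForm x y : ℂ) := by
  simp only [dotProduct, mulVec, ChoiMap, map_apply, vecMulVec_apply, of_apply, cons_val',
    cons_val_fin_one, Fin.sum_univ_three, cons_val_zero, cons_val_one, cons_val, choiForm]
  push_cast
  ring

theorem four_mul_sum_sq_mul_choiForm (x y : Fin 3 → ℝ) :
    4 * ((y 0 ^ 2 + y 1 ^ 2 + y 2 ^ 2) * choiForm x y) =
      (2 * x 0 * y 0 ^ 2 + x 0 * y 1 ^ 2 - 2 * x 1 * y 0 * y 1 - x 2 * y 0 * y 2) ^ 2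
      + 3 * (x 0 * y 1 ^ 2 - x 2 * y 0 * y 2) ^ 2
      + (2 * x 0 * y 0 * y 1 - x 1 * y 1 ^ 2 - 2 * x 1 * y 2 ^ 2 + x 2 * y 1 * y 2) ^ 2
      + (2 * x 0 * y 0 * y 2 + x 1 * y 1 * y 2 - x 2 * y 0 ^ 2 - 2 * x 2 * y 2 ^ 2) ^ 2
      + (2 * x 0 * y 1 * y 2 - x 1 * y 0 * y 2 - x 2 * y 0 * y 1) ^ 2
      + 3 * (x 1 * y 1 ^ 2 - x 2 * y 1 * y 2) ^ 2
      + 3 * (x 1 * y 0 * y 2 - x 2 * y 0 * y 1) ^ 2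
      + 3 * (x 1 * y 1 * y 2 - x 2 * y 0 ^ 2) ^ 2 := by
  unfold choiForm
  ring

theorem sum_sq_mul_choiForm_nonneg (x y : Fin 3 → ℝ) :
    0 ≤ (y 0 ^ 2 + y 1 ^ 2 + y 2 ^ 2) * choiForm x y := by
  have h4 : 0 ≤ 4 * ((y 0 ^ 2 + y 1 ^ 2 + y 2 ^ 2) * choiForm x y) := by
    rw [four_mul_sum_sq_mul_choiForm]
    positivity
  linarith

theorem choiForm_nonneg (x y : Fin 3 → ℝ) : 0 ≤ choiForm x y := by
  rcases (by positivity : (0 : ℝ) ≤ y 0 ^ 2 + y 1 ^ 2 + y 2 ^ 2).eq_or_lt with hy | hy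
  · have h0 : y 0 = 0 := by nlinarith [sq_nonneg (y 1), sq_nonneg (y 2)]
    have h1 : y 1 = 0 := by nlinarith [sq_nonneg (y 0), sq_nonneg (y 2)]
    have h2 : y 2 = 0 := by nlinarith [sq_nonneg (y 0), sq_nonneg (y 1)]
    simp only [choiForm, h0, h1, h2]
    norm_num
  · exact nonneg_of_mul_nonneg_right (sum_sq_mul_choiForm_nonneg x y) hy

/-- The biquadratic real form of the Choi map: for real vectors x, y,
yᵗ·Φ(xxᵗ)·y = (x₁²+x₃²)y₁² + (x₂²+x₁²)y₂² + (x₃²+x₂²)y₃²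
              − 2(x₁x₂y₁y₂ + x₂x₃y₂y₃ + x₃x₁y₃y₁), and this quantity is nonnegative. -/
theorem choi_biquadratic_form (x y : Fin 3 → ℝ) :
    (fun j => (y j : ℂ)) ⬝ᵥ
        (ChoiMap ((vecMulVec x x).map Complex.ofReal)).mulVec (fun j => (y j : ℂ)) =
      (((x 0 ^ 2 + x 2 ^ 2) * y 0 ^ 2 + (x 1 ^ 2 + x 0 ^ 2) * y 1 ^ 2
          + (x 2 ^ 2 + x 1 ^ 2) * y 2 ^ 2
          - 2 * (x 0 * x 1 * y 0 * y 1 + x 1 * x 2 * y 1 * y 2 + x 2 * x 0 * y 2 * y 0) : ℝ)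
        : ℂ) ∧
    0 ≤ (x 0 ^ 2 + x 2 ^ 2) * y 0 ^ 2 + (x 1 ^ 2 + x 0 ^ 2) * y 1 ^ 2
          + (x 2 ^ 2 + x 1 ^ 2) * y 2 ^ 2
          - 2 * (x 0 * x 1 * y 0 * y 1 + x 1 * x 2 * y 1 * y 2 + x 2 * x 0 * y 2 * y 0) :=
  ⟨dotProduct_choiMap_vecMulVec_mulVec x y, choiForm_nonneg x y⟩
end
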